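/- With λ, Δ, S, C, a, b, g̃, P_d as defined, for every t ∈ (0, Δ) the function P_d is differentiable at t with derivative P_d′(t) = λ·exp(λt)·∫_t^Δ g̃(τ)·exp(−λτ) dτ + λ·exp(λ(t−Δ))·∫_0^Δ g̃(τ)·exp(−λτ) dτ + λ·exp(λ(Δ−t))·∫_{Δ−t}^Δ g̃(τ)·exp(−λτ) dτ + (a + b)·λ·exp(−λ(Δ−t)) + b·λ·exp(−λ(2Δ−t)) + b·λ·exp(−λt). (This verifies that P_d is the cumulative distribution of the steady-state delay density p_d(t) = ∫_0^∞ [g(t+x) + g(t+x−Δ) + g(x−t+Δ)]·λe^{−λx} dx, written out for g = g̃ + a·δ_0 + b·δ_Δ.) -/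

import Mathlib

/-!
On `(0, Δ)` the function `P` is the closed form `delayCDF`, so it suffices to differentiate that.
The three integrals of `g̃(τ) e^{-λτ} = C e^{-λτ/2}` are elementary. Writing `u = e^{λt/2}` and
`w = e^{λΔ/2}`, the terms in `u⁻²` cancel by the choice of `b`, and the terms in `u²` cancel
precisely because `C` is normalised by `8 C S = λ (1 + e^{-λΔ})` with `S = w + w⁻¹ - 1 > 0`.
-/

open Real Set MeasureTheory intervalIntegral

lemma integral_mul_exp_half_mul_exp_neg {lam : ℝ} (hlam : lam ≠ 0) (C u v : ℝ) :
    ∫ τ in u..v, C * exp (lam * τ / 2) * exp (-(lam * τ)) =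
      2 * C / lam * (exp (-(lam * u) / 2) - exp (-(lam * v) / 2)) := by
  have hintegrand : (fun τ => C * exp (lam * τ / 2) * exp (-(lam * τ))) =
      fun τ => C * exp (-lam / 2 * τ) := by
    funext τ
    rw [mul_assoc, ← exp_add]
    ring_nf
  rw [hintegrand, intervalIntegral.integral_const_mul,
    integral_comp_mul_left (fun x => exp x) (by simpa using hlam), integral_exp, smul_eq_mul]
  field_simp
  ring_nf

lemma exp_add_exp_neg_sub_one_pos (x : ℝ) : 0 < exp x + exp (-x) - 1 := by
  have := one_le_cosh x
  rw [cosh_eq] at this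
  linarith

lemma exp_intCast_mul_add_intCast_mul (m n : ℤ) (x y : ℝ) :
    exp (m * x + n * y) = exp x ^ m * exp y ^ n := by
  rw [exp_add, mul_comm (m : ℝ), mul_comm (n : ℝ), exp_mul, exp_mul, rpow_intCast, rpow_intCast]

noncomputable def delayCDF (lam Δ C t : ℝ) : ℝ :=
  4 * C / lam * (exp (lam * t / 2) - exp (lam * (Δ - t) / 2) + exp (lam * Δ / 2 - lam * t)) +
    (1 - exp (-(lam * t))) / 2

lemma hasDerivAt_delayCDF (lam Δ C t : ℝ) :
    HasDerivAt (delayCDF lam Δ C)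
      (4 * C / lam * (lam / 2 * exp (lam * t / 2) + lam / 2 * exp (lam * (Δ - t) / 2)
          - lam * exp (lam * Δ / 2 - lam * t)) + lam * exp (-(lam * t)) / 2) t := by
  have hmul := (hasDerivAt_id' t).const_mul lam
  have d1 := (hmul.div_const 2).exp
  have d2 := ((((hasDerivAt_id' t).const_sub Δ).const_mul lam).div_const 2).exp
  have d3 := (hmul.const_sub (lam * Δ / 2)).exp
  have d4 := hmul.fun_neg.exp
  refine ((((d1.sub d2).add d3).const_mul (4 * C / lam)).add
    (((hasDerivAt_const t 1).sub d4).div_const 2)).congr_deriv ?_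
  ring

noncomputable def delayDensity (lam Δ C a b t : ℝ) : ℝ :=
  lam * exp (lam * t) * (∫ τ in t..Δ, C * exp (lam * τ / 2) * exp (-(lam * τ)))
    + lam * exp (lam * (t - Δ)) * (∫ τ in (0 : ℝ)..Δ, C * exp (lam * τ / 2) * exp (-(lam * τ)))
    + lam * exp (lam * (Δ - t)) * (∫ τ in (Δ - t)..Δ, C * exp (lam * τ / 2) * exp (-(lam * τ)))
    + (a + b) * lam * exp (-(lam * (Δ - t)))
    + b * lam * exp (-(lam * (2 * Δ - t)))
    + b * lam * exp (-(lam * t))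

lemma deriv_delayCDF_eq_delayDensity {lam Δ C a b : ℝ} (hlam : lam ≠ 0)
    (hC : 8 * C * (exp (lam * Δ / 2) + exp (-(lam * Δ) / 2) - 1) = lam * (1 + exp (-(lam * Δ))))
    (ha : a = 2 * C / lam) (hb : b = 1 / 2 - 2 * exp (lam * Δ / 2) / lam * C) (t : ℝ) :
    4 * C / lam * (lam / 2 * exp (lam * t / 2) + lam / 2 * exp (lam * (Δ - t) / 2)
        - lam * exp (lam * Δ / 2 - lam * t)) + lam * exp (-(lam * t)) / 2 =
      delayDensity lam Δ C a b t := by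
  set u := exp (lam * t / 2)
  set w := exp (lam * Δ / 2)
  have hu : u ≠ 0 := (exp_pos _).ne'
  have hw : w ≠ 0 := (exp_pos _).ne'
  have hexp (m n : ℤ) (z : ℝ) (hz : z = m * (lam * t / 2) + n * (lam * Δ / 2)) :
      exp z = u ^ m * w ^ n := hz ▸ exp_intCast_mul_add_intCast_mul m n _ _
  simp only [delayDensity, integral_mul_exp_half_mul_exp_neg hlam, ha, hb]
  rw [hexp 0 (-1) (-(lam * Δ) / 2) (by push_cast; ring),
    hexp 0 (-2) (-(lam * Δ)) (by push_cast; ring)] at hC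
  rw [hexp 2 0 (lam * t) (by push_cast; ring),
    hexp (-1) 0 (-(lam * t) / 2) (by push_cast; ring),
    hexp 0 (-1) (-(lam * Δ) / 2) (by push_cast; ring),
    hexp 2 (-2) (lam * (t - Δ)) (by push_cast; ring),
    hexp 0 0 (-(lam * 0) / 2) (by push_cast; ring),
    hexp (-2) 2 (lam * (Δ - t)) (by push_cast; ring),
    hexp 1 (-1) (-(lam * (Δ - t)) / 2) (by push_cast; ring),
    hexp 2 (-2) (-(lam * (Δ - t))) (by push_cast; ring),
    hexp 2 (-4) (-(lam * (2 * Δ - t))) (by push_cast; ring),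
    hexp (-2) 0 (-(lam * t)) (by push_cast; ring),
    hexp (-1) 1 (lam * (Δ - t) / 2) (by push_cast; ring),
    hexp (-2) 1 (lam * Δ / 2 - lam * t) (by push_cast; ring)]
  simp only [zpow_neg, zpow_ofNat] at hC ⊢
  field_simp at hC ⊢
  linear_combination u ^ 4 * hC

theorem Pd_hasDerivAt_general
    (lam Δ S C a b : ℝ) (P : ℝ → ℝ) (hlam : 0 < lam)
    (hS : S = Real.exp (lam * Δ / 2) + Real.exp (-(lam * Δ) / 2) - 1)
    (hC : C = lam * (1 + Real.exp (-(lam * Δ))) / (8 * S))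
    (ha : a = 2 * C / lam)
    (hb : b = 1 / 2 - (2 * Real.exp (lam * Δ / 2) / lam) * C)
    (hP : ∀ t ∈ Set.Icc (0 : ℝ) Δ,
      P t = (4 * C / lam) *
          (Real.exp (lam * t / 2) - Real.exp (lam * (Δ - t) / 2) +
            Real.exp (lam * Δ / 2 - lam * t)) +
        (1 - Real.exp (-(lam * t))) / 2) :
    ∀ t ∈ Set.Ioo (0 : ℝ) Δ,
      HasDerivAt P
        ( lam * Real.exp (lam * t) *
            (∫ τ in t..Δ, (C * Real.exp (lam * τ / 2)) * Real.exp (-(lam * τ)))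
        + lam * Real.exp (lam * (t - Δ)) *
            (∫ τ in (0 : ℝ)..Δ, (C * Real.exp (lam * τ / 2)) * Real.exp (-(lam * τ)))
        + lam * Real.exp (lam * (Δ - t)) *
            (∫ τ in (Δ - t)..Δ, (C * Real.exp (lam * τ / 2)) * Real.exp (-(lam * τ)))
        + (a + b) * lam * Real.exp (-(lam * (Δ - t)))
        + b * lam * Real.exp (-(lam * (2 * Δ - t)))
        + b * lam * Real.exp (-(lam * t)) ) t := by
  intro t ⟨ht0, htΔ⟩
  have hS_pos : 0 < S := by
    simpa only [hS, neg_div] using exp_add_exp_neg_sub_one_pos (lam * Δ / 2)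
  have hnorm : 8 * C * S = lam * (1 + exp (-(lam * Δ))) := by
    rw [hC]
    field_simp
  have hP_eq : P =ᶠ[nhds t] delayCDF lam Δ C := by
    filter_upwards [Ioo_mem_nhds ht0 htΔ] with s hs using hP s (Ioo_subset_Icc_self hs)
  exact ((hasDerivAt_delayCDF lam Δ C t).congr_of_eventuallyEq hP_eq).congr_deriv
    (deriv_delayCDF_eq_delayDensity hlam.ne' (hS ▸ hnorm) ha hb t)

/-- `P_d` is the cumulative distribution of the steady-state delay density
`p_d(t) = ∫₀^∞ [g(t+x) + g(t+x−Δ) + g(x−t+Δ)]·λe^{−λx} dx` for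
`g = g̃ + a·δ₀ + b·δ_Δ` (Proposition 1 of the paper): on `(0, Δ)` its
derivative is the density written out explicitly. -/
theorem Pd_hasDerivAt
    (lam Δ S C a b : ℝ) (P : ℝ → ℝ) (hlam : 0 < lam) (hΔ : 0 < Δ)
    (hS : S = Real.exp (lam * Δ / 2) + Real.exp (-(lam * Δ) / 2) - 1)
    (hC : C = lam * (1 + Real.exp (-(lam * Δ))) / (8 * S))
    (ha : a = 2 * C / lam)
    (hb : b = 1 / 2 - (2 * Real.exp (lam * Δ / 2) / lam) * C)
    (hP : ∀ t ∈ Set.Icc (0 : ℝ) Δ,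
      P t = (4 * C / lam) *
          (Real.exp (lam * t / 2) - Real.exp (lam * (Δ - t) / 2) +
            Real.exp (lam * Δ / 2 - lam * t)) +
        (1 - Real.exp (-(lam * t))) / 2) :
    ∀ t ∈ Set.Ioo (0 : ℝ) Δ,
      HasDerivAt P
        ( lam * Real.exp (lam * t) *
            (∫ τ in t..Δ, (C * Real.exp (lam * τ / 2)) * Real.exp (-(lam * τ)))
        + lam * Real.exp (lam * (t - Δ)) *
            (∫ τ in (0 : ℝ)..Δ, (C * Real.exp (lam * τ / 2)) * Real.exp (-(lam * τ)))
        + lam * Real.exp (lam * (Δ - t)) *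
            (∫ τ in (Δ - t)..Δ, (C * Real.exp (lam * τ / 2)) * Real.exp (-(lam * τ)))
        + (a + b) * lam * Real.exp (-(lam * (Δ - t)))
        + b * lam * Real.exp (-(lam * (2 * Δ - t)))
        + b * lam * Real.exp (-(lam * t)) ) t :=
  Pd_hasDerivAt_general lam Δ S C a b P hlam hS hC ha hb hP
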